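/- arXiv:1707.07751 — 2 statements merged into one kernel-verified Lean document; each statement's English description precedes it below -/
import Mathlib

section
/- Let h be a non-negative harmonic function on the open Euclidean ball B(z₀, r) in the plane ℝ². Then for every z ∈ B(z₀, r), one has ((r - |z - z₀|)/(r + |z - z₀|)) · h(z₀) ≤ h(z) ≤ ((r + |z - z₀|)/(r - |z - z₀|)) · h(z₀). -/
open Metric

noncomputable section

section HarnackAux
open Complex ContinuousLinearMap
set_option maxHeartbeats 1600000

def mIc : ℂ →L[ℝ] ℂ := Complex.I • ContinuousLinearMap.id ℝ ℂ
def Pc : (ℂ →L[ℝ] ℝ) →L[ℝ] (ℂ →L[ℝ] ℝ) := (ContinuousLinearMap.compL ℝ ℂ ℂ ℝ).flip mIc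
def om (u : ℂ → ℝ) (w : ℂ) : ℂ →L[ℝ] ℝ := -(Pc (fderiv ℝ u w))
@[simp] lemma mIc_apply (ξ : ℂ) : mIc ξ = Complex.I * ξ := by simp [mIc]
@[simp] lemma Pc_apply (A : ℂ →L[ℝ] ℝ) (ξ : ℂ) : Pc A ξ = A (Complex.I * ξ) := by simp [Pc]
@[simp] lemma om_apply (u : ℂ → ℝ) (w ξ : ℂ) :
    om u w ξ = -(fderiv ℝ u w (Complex.I * ξ)) := by simp [om]
def vconj (u : ℂ → ℝ) (c z : ℂ) : ℝ := ∫ t in (0:ℝ)..1, om u (c + t • (z - c)) (z - c)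


lemma vconj_hasFDerivAt {u : ℂ → ℝ} {c : ℂ} {r : ℝ}
    (hu : ContDiffOn ℝ 2 u (ball c r))
    (hcl : ∀ w ∈ ball c r, ∀ ξ η : ℂ,
      fderiv ℝ (fderiv ℝ u) w ξ (Complex.I * η) = fderiv ℝ (fderiv ℝ u) w η (Complex.I * ξ))
    {z : ℂ} (hz : z ∈ ball c r) :
    HasFDerivAt (vconj u c) (om u z) z := by
  have hop : IsOpen (ball c r) := isOpen_ball
  set B : ℂ → ℂ →L[ℝ] ℂ →L[ℝ] ℝ := fderiv ℝ (fderiv ℝ u) with hB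
  have hLd : ∀ w ∈ ball c r, HasFDerivAt (fderiv ℝ u) (B w) w := by
    intro w hw
    have h1 : ContDiffAt ℝ 2 u w := hu.contDiffAt (hop.mem_nhds hw)
    have h2 : ContDiffAt ℝ 1 (fderiv ℝ u) w := h1.fderiv_right (by norm_num)
    exact (h2.differentiableAt one_ne_zero).hasFDerivAt
  have hu' : ContDiffOn ℝ 1 (fderiv ℝ u) (ball c r) :=
    hu.fderiv_of_isOpen (m := 1) hop (by norm_num)
  have hLc : ContinuousOn (fderiv ℝ u) (ball c r) := hu'.continuousOn
  have hBc : ContinuousOn B (ball c r) :=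
    (hu'.fderiv_of_isOpen (m := 0) hop (by norm_num)).continuousOn
  have hzr := mem_ball.1 hz
  set δ : ℝ := (r - dist z c) / 2 with hδdef
  have hδ : 0 < δ := by simp only [hδdef]; linarith
  set ρ : ℝ := dist z c + δ with hρdef
  have hρr : ρ < r := by simp only [hρdef, hδdef]; linarith
  have hρ0 : 0 ≤ ρ := by positivity
  have hsub : closedBall c ρ ⊆ ball c r := closedBall_subset_ball hρr
  have hxcρ : ∀ x ∈ ball z δ, ‖x - c‖ ≤ ρ := by
    intro x hx
    have h1 : dist x c ≤ dist x z + dist z c := dist_triangle x z c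
    have h2 : dist x z < δ := mem_ball.1 hx
    rw [← dist_eq_norm]
    simp only [hρdef]; linarith
  have hmem : ∀ x ∈ ball z δ, ∀ t ∈ Set.Icc (0:ℝ) 1, c + t • (x - c) ∈ closedBall c ρ := by
    intro x hx t ht
    rw [mem_closedBall, dist_eq_norm]
    have h3 : c + t • (x - c) - c = t • (x - c) := by abel
    rw [h3, norm_smul]
    calc ‖t‖ * ‖x - c‖ ≤ 1 * ρ := by
          apply mul_le_mul _ (hxcρ x hx) (norm_nonneg _) zero_le_one
          rw [Real.norm_eq_abs, abs_le]; exact ⟨by linarith [ht.1], ht.2⟩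
      _ = ρ := one_mul ρ
  obtain ⟨M, hM⟩ := (isCompact_closedBall c ρ).exists_bound_of_continuousOn (f := fderiv ℝ u) (hLc.mono hsub)
  obtain ⟨N, hN⟩ := (isCompact_closedBall c ρ).exists_bound_of_continuousOn (f := B) (hBc.mono hsub)
  have hM0 : 0 ≤ M := le_trans (norm_nonneg _) (hM c (mem_closedBall_self hρ0))
  have hN0 : 0 ≤ N := le_trans (norm_nonneg _) (hN c (mem_closedBall_self hρ0))
  set F : ℂ → ℝ → ℝ := fun x t => om u (c + t • (x - c)) (x - c) with hFdef
  set F' : ℂ → ℝ → ℂ →L[ℝ] ℝ := fun x t =>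
    om u (c + t • (x - c))
      - t • ((ContinuousLinearMap.apply ℝ ℝ (Complex.I * (x - c))).comp (B (c + t • (x - c))))
    with hF'def
  -- uIoc facts
  have huIoc : Set.uIoc (0:ℝ) 1 = Set.Ioc 0 1 := Set.uIoc_of_le zero_le_one
  have huIcc : Set.uIcc (0:ℝ) 1 = Set.Icc 0 1 := Set.uIcc_of_le zero_le_one
  have hIoc_sub : Set.Ioc (0:ℝ) 1 ⊆ Set.Icc 0 1 := Set.Ioc_subset_Icc_self
  -- continuity in t
  have hγcont : ∀ x : ℂ, ContinuousOn (fun t : ℝ => c + t • (x - c)) (Set.Icc 0 1) := by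
    intro x; fun_prop
  have homcont : ∀ x ∈ ball z δ, ContinuousOn (fun t : ℝ => om u (c + t • (x - c)))
      (Set.Icc 0 1) := by
    intro x hx
    have hmaps : Set.MapsTo (fun t : ℝ => c + t • (x - c)) (Set.Icc 0 1) (ball c r) :=
      fun t ht => hsub (hmem x hx t ht)
    have h1 : ContinuousOn (fun t : ℝ => fderiv ℝ u (c + t • (x - c))) (Set.Icc 0 1) :=
      hLc.comp (hγcont x) hmaps
    exact (Pc.continuous.comp_continuousOn h1).neg
  have hFcont : ∀ x ∈ ball z δ, ContinuousOn (F x) (Set.Icc (0:ℝ) 1) := by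
    intro x hx
    exact (homcont x hx).clm_apply continuousOn_const
  have hBγcont : ContinuousOn (fun t : ℝ => B (c + t • (z - c))) (Set.Icc 0 1) := by
    have hmaps : Set.MapsTo (fun t : ℝ => c + t • (z - c)) (Set.Icc 0 1) (ball c r) :=
      fun t ht => hsub (hmem z (mem_ball_self hδ) t ht)
    exact hBc.comp (hγcont z) hmaps
  have hF'cont : ContinuousOn (fun t => F' z t) (Set.Icc (0:ℝ) 1) := by
    apply ContinuousOn.sub (homcont z (mem_ball_self hδ))
    exact (continuousOn_id.smul (continuousOn_const.clm_comp hBγcont))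
  have hFz_uIcc : ContinuousOn (F z) (Set.uIcc (0:ℝ) 1) := by
    rw [huIcc]; exact hFcont z (mem_ball_self hδ)
  have hF'_uIcc : ContinuousOn (fun t => F' z t) (Set.uIcc (0:ℝ) 1) := by
    rw [huIcc]; exact hF'cont
  -- membership of z-path
  have hγz : ∀ t ∈ Set.Icc (0:ℝ) 1, c + t • (z - c) ∈ ball c r :=
    fun t ht => hsub (hmem z (mem_ball_self hδ) t ht)
  -- differentiability in x
  have hdiff : ∀ t ∈ Set.Ioc (0:ℝ) 1, ∀ x ∈ ball z δ,
      HasFDerivAt (fun x => F x t) (F' x t) x := by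
    intro t ht x hx
    have ht' : t ∈ Set.Icc (0:ℝ) 1 := hIoc_sub ht
    have hγ : c + t • (x - c) ∈ ball c r := hsub (hmem x hx t ht')
    have hin : HasFDerivAt (fun y : ℂ => c + t • (y - c)) (t • ContinuousLinearMap.id ℝ ℂ) x := by
      exact (((hasFDerivAt_id x).sub_const c).const_smul t).const_add c
    have hout : HasFDerivAt (om u) (-(Pc.comp (B (c + t • (x - c))))) (c + t • (x - c)) := by
      exact (Pc.hasFDerivAt.comp _ (hLd _ hγ)).neg
    have hcomp := hout.comp x hin
    have happ := hcomp.clm_apply ((hasFDerivAt_id x).sub_const c)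
    have heq : ((om u ∘ fun y : ℂ => c + t • (y - c)) x).comp (ContinuousLinearMap.id ℝ ℂ)
        + ((-(Pc.comp (B (c + t • (x - c))))).comp
            (t • ContinuousLinearMap.id ℝ ℂ)).flip (x - c) = F' x t := by
      ext ξ
      simp only [hF'def, Function.comp, ContinuousLinearMap.add_apply,
        ContinuousLinearMap.comp_apply, ContinuousLinearMap.coe_id', id_eq,
        ContinuousLinearMap.flip_apply, ContinuousLinearMap.sub_apply,
        ContinuousLinearMap.smul_apply, ContinuousLinearMap.neg_apply, Pc_apply, om_apply,
        ContinuousLinearMap.apply_apply, smul_eq_mul, map_smul]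
      ring
    simp only [id_eq] at happ
    rw [heq] at happ
    exact happ
  -- norm bound
  have hbound : ∀ t ∈ Set.Ioc (0:ℝ) 1, ∀ x ∈ ball z δ, ‖F' x t‖ ≤ M + N * ρ := by
    intro t ht x hx
    have ht' : t ∈ Set.Icc (0:ℝ) 1 := hIoc_sub ht
    have hγρ : c + t • (x - c) ∈ closedBall c ρ := hmem x hx t ht'
    apply ContinuousLinearMap.opNorm_le_bound _ (by positivity)
    intro ξ
    have h1 : ‖F' x t ξ‖ ≤ ‖om u (c + t • (x - c)) ξ‖
        + ‖t • ((ContinuousLinearMap.apply ℝ ℝ (Complex.I * (x - c))).comp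
            (B (c + t • (x - c)))) ξ‖ := by
      simp only [hF'def, ContinuousLinearMap.sub_apply]
      exact norm_sub_le _ _
    have h2 : ‖om u (c + t • (x - c)) ξ‖ ≤ M * ‖ξ‖ := by
      rw [om_apply]
      rw [norm_neg]
      calc ‖fderiv ℝ u (c + t • (x - c)) (Complex.I * ξ)‖
          ≤ ‖fderiv ℝ u (c + t • (x - c))‖ * ‖Complex.I * ξ‖ := le_opNorm _ _
        _ ≤ M * ‖ξ‖ := by
            rw [norm_mul, Complex.norm_I, one_mul]
            exact mul_le_mul_of_nonneg_right (hM _ hγρ) (norm_nonneg _)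
    have h3 : ‖t • ((ContinuousLinearMap.apply ℝ ℝ (Complex.I * (x - c))).comp
        (B (c + t • (x - c)))) ξ‖ ≤ N * ρ * ‖ξ‖ := by
      simp only [ContinuousLinearMap.smul_apply, ContinuousLinearMap.comp_apply,
        ContinuousLinearMap.apply_apply, norm_smul, Real.norm_eq_abs]
      have h4 : ‖B (c + t • (x - c)) ξ (Complex.I * (x - c))‖
          ≤ N * ‖ξ‖ * ρ := by
        calc ‖B (c + t • (x - c)) ξ (Complex.I * (x - c))‖
            ≤ ‖B (c + t • (x - c))‖ * ‖ξ‖ * ‖Complex.I * (x - c)‖ := le_opNorm₂ _ _ _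
          _ ≤ N * ‖ξ‖ * ρ := by
              rw [norm_mul, Complex.norm_I, one_mul]
              have := hxcρ x hx
              gcongr
              exact hN _ hγρ
      have ht1 : |t| ≤ 1 := by rw [abs_le]; exact ⟨by linarith [ht'.1], ht'.2⟩
      calc |t| * ‖B (c + t • (x - c)) ξ (Complex.I * (x - c))‖
          ≤ 1 * (N * ‖ξ‖ * ρ) := by
            apply mul_le_mul ht1 h4 (norm_nonneg _) zero_le_one
        _ = N * ρ * ‖ξ‖ := by ring
    calc ‖F' x t ξ‖ ≤ M * ‖ξ‖ + N * ρ * ‖ξ‖ := by linarith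
      _ = (M + N * ρ) * ‖ξ‖ := by ring
  -- main application of parametric integral
  have key : HasFDerivAt (fun x => ∫ t in (0:ℝ)..1, F x t)
      (∫ t in (0:ℝ)..1, F' z t) z := by
    apply intervalIntegral.hasFDerivAt_integral_of_dominated_of_fderiv_le
      (F := F) (F' := F') (bound := fun _ => M + N * ρ) (ball_mem_nhds z hδ)
    · filter_upwards [ball_mem_nhds z hδ] with x hx
      exact (((hFcont x hx).mono (huIoc ▸ hIoc_sub)).aestronglyMeasurable measurableSet_uIoc)
    · exact hFz_uIcc.intervalIntegrable
    · exact ((hF'cont.mono (huIoc ▸ hIoc_sub)).aestronglyMeasurable measurableSet_uIoc)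
    · exact MeasureTheory.ae_of_all _ (fun t ht x hx => hbound t (huIoc ▸ ht) x hx)
    · exact intervalIntegrable_const
    · exact MeasureTheory.ae_of_all _ (fun t ht x hx => hdiff t (huIoc ▸ ht) x hx)
  -- FTC identification of the derivative
  have hψ : ∀ t ∈ Set.uIcc (0:ℝ) 1,
      HasDerivAt (fun s : ℝ => s • om u (c + s • (z - c))) (F' z t) t := by
    intro t ht
    rw [huIcc] at ht
    have hγ : c + t • (z - c) ∈ ball c r := hγz t ht
    have hout : HasFDerivAt (om u) (-(Pc.comp (B (c + t • (z - c))))) (c + t • (z - c)) :=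
      (Pc.hasFDerivAt.comp _ (hLd _ hγ)).neg
    have hin : HasDerivAt (fun s : ℝ => c + s • (z - c)) (z - c) t := by
      have h0 : HasDerivAt (fun s : ℝ => s • (z - c)) ((1:ℝ) • (z - c)) t :=
        (hasDerivAt_id t).smul_const (z - c)
      rw [one_smul] at h0
      exact h0.const_add c
    have h1 : HasDerivAt (fun s : ℝ => om u (c + s • (z - c)))
        ((-(Pc.comp (B (c + t • (z - c))))) (z - c)) t := by have := hout.comp_hasDerivAt t hin; exact this
    have h2 := (hasDerivAt_id t).smul h1
    simp only [id_eq, one_smul] at h2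
    have heq : t • ((-(Pc.comp (B (c + t • (z - c))))) (z - c))
        + om u (c + t • (z - c)) = F' z t := by
      ext ξ
      have hkey := hcl _ hγ (z - c) ξ
      simp only [ContinuousLinearMap.add_apply, ContinuousLinearMap.smul_apply,
        ContinuousLinearMap.neg_apply, ContinuousLinearMap.comp_apply, Pc_apply, om_apply,
        ContinuousLinearMap.sub_apply, ContinuousLinearMap.apply_apply, smul_eq_mul, hF'def]
      rw [hkey]
      ring
    rw [heq] at h2
    exact h2
  have hFTC := intervalIntegral.integral_eq_sub_of_hasDerivAt hψ
    hF'_uIcc.intervalIntegrable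
  have hval : (∫ t in (0:ℝ)..1, F' z t) = om u z := by
    rw [hFTC]
    simp
  rw [hval] at key
  exact key

lemma closed_of_harmonic' {u : ℂ → ℝ} {s : Set ℂ} (hs : IsOpen s)
    (hu : ContDiffOn ℝ 2 u s)
    (hlap : ∀ z ∈ s, fderiv ℝ (fun w => fderiv ℝ u w 1) z 1
      + fderiv ℝ (fun w => fderiv ℝ u w Complex.I) z Complex.I = 0)
    {w : ℂ} (hw : w ∈ s) (ξ η : ℂ) :
    fderiv ℝ (fderiv ℝ u) w ξ (Complex.I * η) = fderiv ℝ (fderiv ℝ u) w η (Complex.I * ξ) := by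
  set B : ℂ →L[ℝ] ℂ →L[ℝ] ℝ := fderiv ℝ (fderiv ℝ u) w with hBdef
  have hBd : HasFDerivAt (fderiv ℝ u) B w := by
    have h1 : ContDiffAt ℝ 2 u w := hu.contDiffAt (hs.mem_nhds hw)
    have h2 : ContDiffAt ℝ 1 (fderiv ℝ u) w := h1.fderiv_right (by norm_num)
    exact (h2.differentiableAt one_ne_zero).hasFDerivAt
  have happ : ∀ ζ θ : ℂ, fderiv ℝ (fun y => fderiv ℝ u y ζ) w θ = B θ ζ := by
    intro ζ θ
    have h3 : HasFDerivAt (fun y => fderiv ℝ u y ζ)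
        ((ContinuousLinearMap.apply ℝ ℝ ζ).comp B) w :=
      (ContinuousLinearMap.apply ℝ ℝ ζ).hasFDerivAt.comp w hBd
    rw [h3.fderiv]
    simp
  have hlap' : B 1 1 + B Complex.I Complex.I = 0 := by
    have := hlap w hw
    rwa [happ 1 1, happ Complex.I Complex.I] at this
  have hdec : ∀ ζ : ℂ, ζ = (ζ.re : ℝ) • (1:ℂ) + (ζ.im : ℝ) • Complex.I := by
    intro ζ
    rw [Complex.real_smul, Complex.real_smul, mul_one, Complex.re_add_im]
  have hIdec : ∀ ζ : ℂ, Complex.I * ζ = (-ζ.im : ℝ) • (1:ℂ) + (ζ.re : ℝ) • Complex.I := by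
    intro ζ
    rw [Complex.real_smul, Complex.real_smul, mul_one]
    apply Complex.ext <;> simp
  rw [hIdec η, hIdec ξ]
  conv_lhs => rw [hdec ξ]
  conv_rhs => rw [hdec η]
  simp only [map_add, map_smul, ContinuousLinearMap.add_apply,
    ContinuousLinearMap.smul_apply, smul_eq_mul]
  linear_combination (ξ.im * η.re - ξ.re * η.im) * hlap'

lemma harnack_complex {u : ℂ → ℝ} {c : ℂ} {r : ℝ} (hr : 0 < r)
    (hu : ContDiffOn ℝ 2 u (ball c r))
    (hlap : ∀ z ∈ ball c r, fderiv ℝ (fun w => fderiv ℝ u w 1) z 1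
      + fderiv ℝ (fun w => fderiv ℝ u w Complex.I) z Complex.I = 0)
    (hpos : ∀ z ∈ ball c r, 0 < u z) :
    ∀ z ∈ ball c r, (r - dist z c) / (r + dist z c) * u c ≤ u z ∧
      u z ≤ (r + dist z c) / (r - dist z c) * u c := by
  have hop : IsOpen (ball c r) := isOpen_ball
  have hcl : ∀ w ∈ ball c r, ∀ ξ η : ℂ,
      fderiv ℝ (fderiv ℝ u) w ξ (Complex.I * η)
        = fderiv ℝ (fderiv ℝ u) w η (Complex.I * ξ) :=
    fun w hw => closed_of_harmonic' hop hu hlap hw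
  have hF1 : ∀ w ∈ ball c r, HasFDerivAt u (fderiv ℝ u w) w := fun w hw =>
    ((hu.contDiffAt (hop.mem_nhds hw)).differentiableAt (by norm_num)).hasFDerivAt
  set Q : ℝ →L[ℝ] ℂ := Complex.I • Complex.ofRealCLM with hQdef
  set f : ℂ → ℂ := fun z => Complex.ofRealCLM (u z) + Q (vconj u c z) with hfdef
  have hfre : ∀ z, (f z).re = u z := by
    intro z; simp [hfdef, hQdef]
  have hfim : ∀ z, (f z).im = vconj u c z := by
    intro z; simp [hfdef, hQdef]
  have hfd : ∀ z ∈ ball c r, DifferentiableAt ℂ f z := by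
    intro z hz
    have hv := vconj_hasFDerivAt hu hcl hz
    have hfder : HasFDerivAt f
        (Complex.ofRealCLM.comp (fderiv ℝ u z) + Q.comp (om u z)) z :=
      (Complex.ofRealCLM.hasFDerivAt.comp z (hF1 z hz)).add (Q.hasFDerivAt.comp z hv)
    rw [differentiableAt_iff_restrictScalars ℝ hfder.differentiableAt]
    refine ⟨((fderiv ℝ u z 1 : ℂ) - (fderiv ℝ u z Complex.I : ℂ) * Complex.I)
      • (ContinuousLinearMap.id ℂ ℂ), ?_⟩
    rw [hfder.fderiv]
    ext ξ
    have hLξ : fderiv ℝ u z ξ = ξ.re * fderiv ℝ u z 1 + ξ.im * fderiv ℝ u z Complex.I := by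
      conv_lhs => rw [show ξ = (ξ.re : ℝ) • (1:ℂ) + (ξ.im : ℝ) • Complex.I by
        rw [Complex.real_smul, Complex.real_smul, mul_one, Complex.re_add_im]]
      simp only [map_add, map_smul, smul_eq_mul]
    have hLIξ : fderiv ℝ u z (Complex.I * ξ)
        = -ξ.im * fderiv ℝ u z 1 + ξ.re * fderiv ℝ u z Complex.I := by
      conv_lhs => rw [show Complex.I * ξ = (-ξ.im : ℝ) • (1:ℂ) + (ξ.re : ℝ) • Complex.I by
        rw [Complex.real_smul, Complex.real_smul, mul_one]
        apply Complex.ext <;> simp]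
      simp only [map_add, map_smul, smul_eq_mul]
    simp only [ContinuousLinearMap.coe_restrictScalars', ContinuousLinearMap.smul_apply,
      ContinuousLinearMap.coe_id', id_eq, ContinuousLinearMap.add_apply,
      ContinuousLinearMap.comp_apply, Complex.ofRealCLM_apply, om_apply, hQdef,
      smul_eq_mul]
    rw [hLξ, hLIξ]
    apply Complex.ext <;> simp <;> ring
  have hfdo : DifferentiableOn ℂ f (ball c r) :=
    fun z hz => (hfd z hz).differentiableWithinAt
  have hvc : vconj u c c = 0 := by
    unfold vconj
    simp
  have hfc : f c = (u c : ℂ) := by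
    rw [hfdef]
    simp [hvc]
  set a : ℝ := u c with hadef
  have ha : 0 < a := hpos c (mem_ball_self hr)
  set φ : ℂ → ℂ := fun z => (f z - (a:ℂ)) / (f z + (a:ℂ)) with hφdef
  have hden : ∀ z ∈ ball c r, f z + (a:ℂ) ≠ 0 := by
    intro z hz h0
    have h0' : (f z + (a:ℂ)).re = 0 := by rw [h0]; simp
    rw [Complex.add_re, hfre, Complex.ofReal_re] at h0'
    have := hpos z hz
    linarith
  have hφd : DifferentiableOn ℂ φ (ball c r) :=
    DifferentiableOn.div (hfdo.sub (differentiableOn_const _))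
      (hfdo.add (differentiableOn_const _)) hden
  have hφc : φ c = 0 := by
    rw [hφdef]
    simp [hfc]
  have hφlt : ∀ z ∈ ball c r, ‖φ z‖ < 1 := by
    intro z hz
    rw [hφdef]
    simp only [norm_div]
    rw [div_lt_one (norm_pos_iff.mpr (hden z hz))]
    have h1 : Complex.normSq (f z - (a:ℂ)) < Complex.normSq (f z + (a:ℂ)) := by
      simp only [Complex.normSq_apply, Complex.sub_re, Complex.sub_im, Complex.add_re,
        Complex.add_im, Complex.ofReal_re, Complex.ofReal_im, sub_zero, add_zero]
      rw [hfre]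
      nlinarith [hpos z hz, ha]
    have h2 := Complex.sq_norm (f z - (a:ℂ))
    have h3 := Complex.sq_norm (f z + (a:ℂ))
    nlinarith [norm_nonneg (f z - (a:ℂ)), norm_nonneg (f z + (a:ℂ))]
  have hmaps : Set.MapsTo φ (ball c r) (ball (φ c) 1) := by
    intro z hz
    rw [mem_ball, hφc, dist_zero_right]
    exact hφlt z hz
  intro z hz
  have hkey := Complex.dist_le_div_mul_dist_of_mapsTo_ball hφd (hmaps.mono_right ball_subset_closedBall) hz
  rw [hφc, dist_zero_right] at hkey
  set d : ℝ := dist z c with hddef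
  have hd0 : 0 ≤ d := dist_nonneg
  have hdr : d < r := mem_ball.1 hz
  have habs : ‖f z - (a:ℂ)‖ ≤ d / r * ‖f z + (a:ℂ)‖ := by
    have h4 : f z - (a:ℂ) = φ z * (f z + (a:ℂ)) := by
      rw [hφdef]
      exact (div_mul_cancel₀ _ (hden z hz)).symm
    rw [h4, norm_mul]
    apply mul_le_mul_of_nonneg_right _ (norm_nonneg _)
    calc ‖φ z‖ ≤ 1 / r * d := hkey
      _ = d / r := one_div_mul_eq_div r d
  have habs' : r * ‖f z - (a:ℂ)‖ ≤ d * ‖f z + (a:ℂ)‖ := by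
    calc r * ‖f z - (a:ℂ)‖
        ≤ r * (d / r * ‖f z + (a:ℂ)‖) :=
          mul_le_mul_of_nonneg_left habs hr.le
      _ = d * ‖f z + (a:ℂ)‖ := by
          field_simp
  set x : ℝ := u z with hxdef
  have hx : 0 < x := hpos z hz
  set y : ℝ := (f z).im with hydef
  have h6 : ‖f z - (a:ℂ)‖ ^ 2 = (x - a) ^ 2 + y ^ 2 := by
    rw [Complex.sq_norm, Complex.normSq_apply]
    simp only [Complex.sub_re, Complex.sub_im, Complex.ofReal_re, Complex.ofReal_im,
      sub_zero, hfre]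
    ring
  have h7 : ‖f z + (a:ℂ)‖ ^ 2 = (x + a) ^ 2 + y ^ 2 := by
    rw [Complex.sq_norm, Complex.normSq_apply]
    simp only [Complex.add_re, Complex.add_im, Complex.ofReal_re, Complex.ofReal_im,
      add_zero, hfre]
    ring
  have hsq : r ^ 2 * ((x - a) ^ 2 + y ^ 2) ≤ d ^ 2 * ((x + a) ^ 2 + y ^ 2) := by
    nlinarith [mul_self_le_mul_self
      (by positivity : (0:ℝ) ≤ r * ‖f z - (a:ℂ)‖) habs', h6, h7]
  have hstep : r ^ 2 * (x - a) ^ 2 ≤ d ^ 2 * (x + a) ^ 2 := by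
    nlinarith [hsq, mul_nonneg (by nlinarith : (0:ℝ) ≤ r ^ 2 - d ^ 2) (sq_nonneg y)]
  constructor
  · rw [div_mul_eq_mul_div, div_le_iff₀ (by linarith : (0:ℝ) < r + d)]
    nlinarith [hstep, mul_nonneg hd0 (by linarith : (0:ℝ) ≤ x + a),
      sq_nonneg (r * (x - a) + d * (x + a)), sq_nonneg (r * (x - a) - d * (x + a)), hx, ha]
  · rw [div_mul_eq_mul_div, le_div_iff₀ (by linarith : (0:ℝ) < r - d)]
    nlinarith [hstep, mul_nonneg hd0 (by linarith : (0:ℝ) ≤ x + a),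
      sq_nonneg (r * (x - a) + d * (x + a)), sq_nonneg (r * (x - a) - d * (x + a)), hx, ha]

end HarnackAux

/-- A function on the plane is harmonic on a set `s` if it is `C²` there and its
Laplacian (sum of the second partial derivatives along the coordinate directions)
vanishes at every point of `s`. -/
def HarmonicOnPlane (h : EuclideanSpace ℝ (Fin 2) → ℝ) (s : Set (EuclideanSpace ℝ (Fin 2))) :
    Prop :=
  ContDiffOn ℝ 2 h s ∧
    ∀ z ∈ s, (∑ i : Fin 2,
      fderiv ℝ (fun w => fderiv ℝ h w (EuclideanSpace.single i 1)) z
        (EuclideanSpace.single i 1)) = 0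

/-- The elliptic Harnack inequality for non-negative harmonic functions on a planar ball. -/
theorem harnack_inequality_plane (z₀ : EuclideanSpace ℝ (Fin 2)) (r : ℝ) (hr : 0 < r)
    (h : EuclideanSpace ℝ (Fin 2) → ℝ)
    (hh : HarmonicOnPlane h (ball z₀ r))
    (hpos : ∀ z ∈ ball z₀ r, 0 ≤ h z) :
    ∀ z ∈ ball z₀ r,
      (r - dist z z₀) / (r + dist z z₀) * h z₀ ≤ h z ∧
        h z ≤ (r + dist z z₀) / (r - dist z z₀) * h z₀ := by
  intro z hz
  set E := Complex.orthonormalBasisOneI.repr with hEdef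
  set EL := E.toContinuousLinearEquiv with hELdef
  have hELcoe : (⇑EL : ℂ → EuclideanSpace ℝ (Fin 2)) = ⇑E := rfl
  set c : ℂ := E.symm z₀ with hcdef
  set ζ : ℂ := E.symm z with hζdef
  have hEc : E c = z₀ := E.apply_symm_apply z₀
  have hEζ : E ζ = z := E.apply_symm_apply z
  have hdist : dist ζ c = dist z z₀ := by
    rw [hζdef, hcdef]
    exact E.symm.dist_map z z₀
  have hζball : ζ ∈ ball c r := by rw [mem_ball, hdist]; exact mem_ball.1 hz
  have hmapsE : ∀ w ∈ ball c r, E w ∈ ball z₀ r := by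
    intro w hw
    rw [mem_ball, ← hEc, E.dist_map]
    exact mem_ball.1 hw
  have hE1 : E 1 = EuclideanSpace.single 0 (1:ℝ) := by
    rw [hEdef]
    ext i
    rw [Complex.orthonormalBasisOneI_repr_apply]
    fin_cases i <;> simp [EuclideanSpace.single_apply]
  have hEI : E Complex.I = EuclideanSpace.single 1 (1:ℝ) := by
    rw [hEdef]
    ext i
    rw [Complex.orthonormalBasisOneI_repr_apply]
    fin_cases i <;> simp [EuclideanSpace.single_apply]
  have hEcd : ContDiff ℝ 2 (⇑E) := by
    have := (EL : ℂ →L[ℝ] EuclideanSpace ℝ (Fin 2)).contDiff (n := 2)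
    simpa [hELcoe] using this
  set D : ℝ := dist z z₀ with hDdef
  have hD0 : 0 ≤ D := dist_nonneg
  have hDr : D < r := mem_ball.1 hz
  have key : ∀ ε > (0:ℝ),
      (r - D) / (r + D) * (h z₀ + ε) ≤ h z + ε ∧
        h z + ε ≤ (r + D) / (r - D) * (h z₀ + ε) := by
    intro ε hε
    set u : ℂ → ℝ := fun w => h (E w) + ε with hudef
    have hucd : ContDiffOn ℝ 2 u (ball c r) := by
      have h1 : ContDiffOn ℝ 2 (fun w : ℂ => h (E w)) (ball c r) := by
        apply ContDiffOn.comp hh.1 (hEcd.contDiffOn)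
        intro w hw
        exact hmapsE w hw
      exact h1.add contDiffOn_const
    have hud : ∀ w : ℂ, fderiv ℝ u w
        = (fderiv ℝ h (E w)).comp (EL : ℂ →L[ℝ] EuclideanSpace ℝ (Fin 2)) := by
      intro w
      have h1 : fderiv ℝ u w = fderiv ℝ (fun w' : ℂ => h (E w')) w := fderiv_add_const ε
      have h2 : fderiv ℝ (fun w' : ℂ => h (E w')) w = fderiv ℝ (h ∘ ⇑EL) w := rfl
      rw [h1, h2, EL.comp_right_fderiv]
      rfl
    have hlapu : ∀ w ∈ ball c r,
        fderiv ℝ (fun w' => fderiv ℝ u w' 1) w 1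
          + fderiv ℝ (fun w' => fderiv ℝ u w' Complex.I) w Complex.I = 0 := by
      intro w hw
      have h1 : (fun w' => fderiv ℝ u w' 1)
          = (fun p => fderiv ℝ h p (EuclideanSpace.single 0 (1:ℝ))) ∘ ⇑EL := by
        funext w'
        rw [hud w']
        simp [hELcoe, hE1]
      have h2 : (fun w' => fderiv ℝ u w' Complex.I)
          = (fun p => fderiv ℝ h p (EuclideanSpace.single 1 (1:ℝ))) ∘ ⇑EL := by
        funext w'
        rw [hud w']
        simp [hELcoe, hEI]
      rw [h1, h2, EL.comp_right_fderiv, EL.comp_right_fderiv]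
      have h3 := hh.2 (E w) (hmapsE w hw)
      rw [Fin.sum_univ_two] at h3
      simpa [hELcoe, hE1, hEI] using h3
    have hposu : ∀ w ∈ ball c r, 0 < u w := by
      intro w hw
      have := hpos (E w) (hmapsE w hw)
      simp only [hudef]
      linarith
    have hres := harnack_complex hr hucd hlapu hposu ζ hζball
    rw [hdist] at hres
    simpa [hudef, hEζ, hEc, hDdef] using hres
  have hApos : 0 ≤ (r - D) / (r + D) := by
    apply div_nonneg <;> linarith
  have hA1 : (r - D) / (r + D) ≤ 1 := by
    rw [div_le_one (by linarith : (0:ℝ) < r + D)]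
    linarith
  have hB1 : 1 ≤ (r + D) / (r - D) := by
    rw [le_div_iff₀ (by linarith : (0:ℝ) < r - D)]
    linarith
  have hB0 : 0 < (r + D) / (r - D) := by positivity
  constructor
  · apply le_of_forall_pos_le_add
    intro δ hδ
    have hk := (key δ hδ).1
    nlinarith [mul_nonneg hApos hδ.le]
  · apply le_of_forall_pos_le_add
    intro δ hδ
    set Bq : ℝ := (r + D) / (r - D) with hBdef
    have hk := (key (δ / Bq) (by positivity)).2
    have hBq : Bq * (δ / Bq) = δ := by field_simp
    nlinarith [hk, hBq, div_pos hδ hB0]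
end
end

section
/- Let h be a (not necessarily non-negative) bounded harmonic function on the open ball B(z₀, r) ⊆ ℝ². Then for every z ∈ B(z₀, r), |h(z) - h(z₀)| ≤ (2|z - z₀|/(r - |z - z₀|)) · sup{ |h(z₁) - h(z₂)| : z₁, z₂ ∈ B(z₀, r) }. -/
open Metric Set MeasureTheory Complex
open scoped Real

noncomputable section

namespace HarnackAux

/-- The complex gradient field `∂g/∂x - i ∂g/∂y`. -/
def fC (g : ℂ → ℝ) (w : ℂ) : ℂ :=
  ((fderiv ℝ g w 1 : ℝ) : ℂ) - ((fderiv ℝ g w Complex.I : ℝ) : ℂ) * Complex.I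

variable {c : ℂ} {r : ℝ} {g : ℂ → ℝ}

theorem hasFDerivAt_g (hg : ContDiffOn ℝ 2 g (ball c r)) {z : ℂ} (hz : z ∈ ball c r) :
    HasFDerivAt g (fderiv ℝ g z) z :=
  ((hg.differentiableOn (by norm_num)).differentiableAt
    (isOpen_ball.mem_nhds hz)).hasFDerivAt

theorem hasFDerivAt_fderiv (hg : ContDiffOn ℝ 2 g (ball c r)) {z : ℂ} (hz : z ∈ ball c r) :
    HasFDerivAt (fderiv ℝ g) (fderiv ℝ (fderiv ℝ g) z) z := by
  have h1 : ContDiffOn ℝ 1 (fderiv ℝ g) (ball c r) :=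
    hg.fderiv_of_isOpen isOpen_ball (by norm_num)
  exact ((h1.differentiableOn (by norm_num)).differentiableAt
    (isOpen_ball.mem_nhds hz)).hasFDerivAt

theorem fderiv_apply_eq (hg : ContDiffOn ℝ 2 g (ball c r)) {z : ℂ} (hz : z ∈ ball c r)
    (w : ℂ) : fderiv ℝ g z w = (w * fC g z).re := by
  have hw : w = w.re • (1 : ℂ) + w.im • Complex.I := by
    simp [Complex.real_smul]
  have h1 : fderiv ℝ g z w = w.re * fderiv ℝ g z 1 + w.im * fderiv ℝ g z Complex.I := by
    conv_lhs => rw [hw]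
    rw [(fderiv ℝ g z).map_add, (fderiv ℝ g z).map_smul, (fderiv ℝ g z).map_smul]
    simp [smul_eq_mul]
  rw [h1]
  simp [fC, Complex.mul_re]

theorem hasFDerivAt_fC (hg : ContDiffOn ℝ 2 g (ball c r))
    (hlap : ∀ z ∈ ball c r,
      fderiv ℝ (fun w => fderiv ℝ g w 1) z 1
        + fderiv ℝ (fun w => fderiv ℝ g w Complex.I) z Complex.I = 0)
    {z : ℂ} (hz : z ∈ ball c r) : DifferentiableAt ℂ (fC g) z := by
  classical
  set D2 : ℂ →L[ℝ] ℂ →L[ℝ] ℝ := fderiv ℝ (fderiv ℝ g) z with hD2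
  -- derivative of `w ↦ fderiv ℝ g w v`
  have hA : ∀ v : ℂ, HasFDerivAt (fun w => fderiv ℝ g w v)
      ((ContinuousLinearMap.apply ℝ ℝ v).comp D2) z := by
    intro v
    exact (ContinuousLinearMap.apply ℝ ℝ v).hasFDerivAt.comp z (hasFDerivAt_fderiv hg hz)
  -- symmetry of second derivative
  have hsymm : ∀ v w : ℂ, D2 v w = D2 w v := by
    intro v w
    have hev : ∀ᶠ y in nhds z, HasFDerivAt g (fderiv ℝ g y) y :=
      (isOpen_ball.eventually_mem hz).mono fun y hy => hasFDerivAt_g hg hy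
    exact second_derivative_symmetric_of_eventually hev (hasFDerivAt_fderiv hg hz) v w
  -- Laplace equation in terms of D2
  have hlap' : D2 1 1 + D2 Complex.I Complex.I = 0 := by
    have h1 := (hA 1).fderiv
    have h2 := (hA Complex.I).fderiv
    have := hlap z hz
    rw [h1, h2] at this
    simpa using this
  -- real derivative of fC
  have h1 : HasFDerivAt (fun w => ((fderiv ℝ g w 1 : ℝ) : ℂ))
      (Complex.ofRealCLM.comp ((ContinuousLinearMap.apply ℝ ℝ 1).comp D2)) z :=
    Complex.ofRealCLM.hasFDerivAt.comp z (hA 1)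
  have h2 : HasFDerivAt (fun w => ((fderiv ℝ g w Complex.I : ℝ) : ℂ) * Complex.I)
      ((Complex.ofRealCLM.comp ((ContinuousLinearMap.apply ℝ ℝ Complex.I).comp D2)).smulRight
        Complex.I) z := by
    have := (Complex.ofRealCLM.hasFDerivAt.comp z (hA Complex.I))
    exact this.mul_const' Complex.I
  have hL : HasFDerivAt (fC g)
      ((Complex.ofRealCLM.comp ((ContinuousLinearMap.apply ℝ ℝ 1).comp D2)) -
        ((Complex.ofRealCLM.comp ((ContinuousLinearMap.apply ℝ ℝ Complex.I).comp D2)).smulRight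
          Complex.I)) z := h1.sub h2
  set L : ℂ →L[ℝ] ℂ :=
    (Complex.ofRealCLM.comp ((ContinuousLinearMap.apply ℝ ℝ 1).comp D2)) -
      ((Complex.ofRealCLM.comp ((ContinuousLinearMap.apply ℝ ℝ Complex.I).comp D2)).smulRight
        Complex.I) with hLdef
  have hLw : ∀ w : ℂ, L w = ((D2 w 1 : ℝ) : ℂ) - ((D2 w Complex.I : ℝ) : ℂ) * Complex.I := by
    intro w
    simp [hLdef, ContinuousLinearMap.smulRight_apply, smul_eq_mul]
  -- complex linearity
  have hCR : L Complex.I = Complex.I * L 1 := by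
    rw [hLw, hLw]
    have e1 : D2 Complex.I 1 = D2 1 Complex.I := hsymm _ _
    have e2 : D2 Complex.I Complex.I = -D2 1 1 := by linarith [hlap']
    rw [e1, e2]
    push_cast
    linear_combination ((D2 1 Complex.I : ℝ) : ℂ) * Complex.I_sq
  -- conclude
  have hext : (ContinuousLinearMap.mul ℂ ℂ (L 1)).restrictScalars ℝ = L := by
    apply ContinuousLinearMap.ext
    intro w
    have hw : w = w.re • (1 : ℂ) + w.im • Complex.I := by
      simp [Complex.real_smul]
    have hLw2 : L w = w * L 1 := by
      conv_lhs => rw [hw]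
      rw [L.map_add, L.map_smul, L.map_smul, hCR]
      rw [Complex.real_smul, Complex.real_smul]
      conv_rhs => rw [← Complex.re_add_im w]
      try ring
    show L 1 * w = L w
    rw [hLw2]
    ring
  exact (hasFDerivAt_of_restrictScalars ℝ hL hext).differentiableAt


def eC (θ : ℝ) : ℂ := Real.cos θ + Real.sin θ * Complex.I

theorem abs_eC (θ : ℝ) : ‖eC θ‖ = 1 := by
  simpa [eC] using Complex.norm_cos_add_sin_mul_I θ

theorem continuous_eC : Continuous eC := by
  unfold eC; continuity

theorem periodic_eC : Function.Periodic eC (2 * π) := by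
  intro θ
  simp [eC, Real.cos_add_two_pi, Real.sin_add_two_pi]

theorem exp_eq_eC (θ : ℝ) : Complex.exp (θ * Complex.I) = eC θ := by
  rw [Complex.exp_mul_I, eC, Complex.ofReal_cos, Complex.ofReal_sin]

variable {c : ℂ} {r : ℝ}

theorem mem_aux {z : ℂ} {u t : ℝ} (hu : |u| ≤ t) (h : dist z c + t < r) (θ : ℝ) :
    z + ↑u * eC θ ∈ ball c r := by
  have habs : ‖↑u * eC θ‖ = |u| := by
    rw [norm_mul, Complex.norm_real, Real.norm_eq_abs, abs_eC, mul_one]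
  have : dist (z + ↑u * eC θ) c ≤ |u| + dist z c := by
    calc dist (z + ↑u * eC θ) c ≤ dist (z + ↑u * eC θ) z + dist z c := dist_triangle _ _ _
    _ = |u| + dist z c := by
        rw [Complex.dist_eq, add_sub_cancel_left, habs]
  simp only [mem_ball]
  linarith

theorem integral_eC : ∫ θ in (0:ℝ)..(2*π), eC θ = 0 := by
  have h1 : IntervalIntegrable (fun θ : ℝ => ((Real.cos θ : ℝ) : ℂ)) volume 0 (2*π) := by
    apply Continuous.intervalIntegrable; continuity
  have h2 : IntervalIntegrable (fun θ : ℝ => ((Real.sin θ : ℝ) : ℂ) * Complex.I) volume 0 (2*π) := by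
    apply Continuous.intervalIntegrable; continuity
  have : ∫ θ in (0:ℝ)..(2*π), eC θ =
      (∫ θ in (0:ℝ)..(2*π), ((Real.cos θ : ℝ) : ℂ)) +
      ∫ θ in (0:ℝ)..(2*π), ((Real.sin θ : ℝ) : ℂ) * Complex.I := by
    rw [← intervalIntegral.integral_add h1 h2]; rfl
  rw [this, intervalIntegral.integral_mul_const, intervalIntegral.integral_ofReal,
    intervalIntegral.integral_ofReal, integral_cos, integral_sin]
  simp

variable {g : ℂ → ℝ}

theorem diffOn_fC (hg : ContDiffOn ℝ 2 g (ball c r))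
    (hlap : ∀ z ∈ ball c r,
      fderiv ℝ (fun w => fderiv ℝ g w 1) z 1
        + fderiv ℝ (fun w => fderiv ℝ g w Complex.I) z Complex.I = 0) :
    DifferentiableOn ℂ (fC g) (ball c r) :=
  fun z hz => (hasFDerivAt_fC hg hlap hz).differentiableWithinAt

theorem key_integral (hg : ContDiffOn ℝ 2 g (ball c r))
    (hlap : ∀ z ∈ ball c r,
      fderiv ℝ (fun w => fderiv ℝ g w 1) z 1
        + fderiv ℝ (fun w => fderiv ℝ g w Complex.I) z Complex.I = 0)
    {z : ℂ} {u : ℝ} (hu0 : 0 ≤ u) (hur : dist z c + u < r) :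
    ∫ θ in (-π)..π, (eC θ * fC g (z + ↑u * eC θ)) = 0 := by
  have hzball : z ∈ ball c r := by
    have : dist z c < r := by
      have := dist_nonneg (x := z) (y := c); linarith
    simpa [mem_ball] using this
  have hfCc : ContinuousOn (fC g) (ball c r) := (diffOn_fC hg hlap).continuousOn
  -- move to `0..2π`
  have hper : Function.Periodic (fun θ => eC θ * fC g (z + ↑u * eC θ)) (2 * π) := by
    intro θ
    simp only [periodic_eC θ]
  have hshift := hper.intervalIntegral_add_eq (-π) 0
  have hiv : -π + 2 * π = π := by ring
  rw [hiv, zero_add] at hshift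
  rw [hshift]
  rcases eq_or_lt_of_le hu0 with h0 | hpos
  · -- u = 0
    subst h0
    push_cast
    simp only [zero_mul, add_zero]
    rw [intervalIntegral.integral_mul_const, integral_eC, zero_mul]
  · -- u > 0 : Cauchy-Goursat
    have hsub : closedBall z u ⊆ ball c r := by
      intro x hx
      simp only [mem_closedBall] at hx
      simp only [mem_ball]
      have := dist_triangle x z c
      linarith
    have h0 : (∮ w in C(z, u), fC g w) = 0 := by
      apply circleIntegral_eq_zero_of_differentiable_on_off_countable hu0 Set.countable_empty
        (hfCc.mono hsub)
      intro w hw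
      have hwball : w ∈ ball c r := by
        apply ball_subset_ball' ?_ hw.1
        rw [dist_comm] at hur ⊢
        linarith
      exact hasFDerivAt_fC hg hlap hwball
    rw [circleIntegral] at h0
    have hrw : ∀ θ : ℝ, deriv (circleMap z u) θ • fC g (circleMap z u θ)
        = (↑u * Complex.I) * (eC θ * fC g (z + ↑u * eC θ)) := by
      intro θ
      rw [deriv_circleMap]
      simp only [circleMap, smul_eq_mul, exp_eq_eC]
      push_cast
      ring_nf
    rw [intervalIntegral.integral_congr (fun θ _ => hrw θ)] at h0
    rw [intervalIntegral.integral_const_mul] at h0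
    have hne : (↑u * Complex.I : ℂ) ≠ 0 := by
      simp [Complex.I_ne_zero, Complex.ofReal_ne_zero, ne_of_gt hpos]
    exact (mul_eq_zero.mp h0).resolve_left hne

theorem circle_mvp (hg : ContDiffOn ℝ 2 g (ball c r))
    (hlap : ∀ z ∈ ball c r,
      fderiv ℝ (fun w => fderiv ℝ g w 1) z 1
        + fderiv ℝ (fun w => fderiv ℝ g w Complex.I) z Complex.I = 0)
    {z : ℂ} {t : ℝ} (ht0 : 0 ≤ t) (htr : dist z c + t < r) :
    ∫ θ in (-π)..π, g (z + ↑t * eC θ) = 2 * π * g z := by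
  have hzball : z ∈ ball c r := by
    have hd := dist_nonneg (x := z) (y := c)
    simp only [mem_ball]; linarith
  have hgc : ContinuousOn g (ball c r) := hg.continuousOn
  have hfCc : ContinuousOn (fC g) (ball c r) := (diffOn_fC hg hlap).continuousOn
  have hmem : ∀ u : ℝ, u ∈ Icc 0 t → ∀ θ : ℝ, z + ↑u * eC θ ∈ ball c r := by
    intro u hu θ
    exact mem_aux (abs_le.2 ⟨by linarith [hu.1], hu.2⟩) htr θ
  -- the integrand of the double integral
  set F : ℝ → ℝ → ℝ := fun u θ => (eC θ * fC g (z + ↑u * eC θ)).re with hF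
  -- radial FTC
  have hrad : ∀ θ : ℝ, g (z + ↑t * eC θ) - g z = ∫ u in (0:ℝ)..t, F u θ := by
    intro θ
    have hderiv : ∀ u ∈ uIcc (0:ℝ) t, HasDerivAt (fun u : ℝ => g (z + ↑u * eC θ)) (F u θ) u := by
      intro u hu
      rw [uIcc_of_le ht0] at hu
      have hx : z + ↑u * eC θ ∈ ball c r := hmem u hu θ
      have hpath : HasDerivAt (fun u : ℝ => z + ↑u * eC θ) (eC θ) u := by
        have h1 : HasDerivAt (fun u : ℝ => (u : ℂ)) 1 u := Complex.ofRealCLM.hasDerivAt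
        have h2 := (h1.mul_const (eC θ)).const_add z
        simpa using h2
      have hcomp := (hasFDerivAt_g hg hx).comp_hasDerivAt u hpath
      have : fderiv ℝ g (z + ↑u * eC θ) (eC θ) = F u θ := fderiv_apply_eq hg hx (eC θ)
      rw [this] at hcomp
      exact hcomp
    have hint : IntervalIntegrable (fun u => F u θ) volume 0 t := by
      apply ContinuousOn.intervalIntegrable
      apply Complex.continuous_re.comp_continuousOn
      apply ContinuousOn.mul continuousOn_const
      apply hfCc.comp ((continuous_const.add ((Complex.continuous_ofReal.mul
        continuous_const))).continuousOn)
      intro u hu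
      rw [uIcc_of_le ht0] at hu
      exact hmem u hu θ
    have := intervalIntegral.integral_eq_sub_of_hasDerivAt hderiv hint
    rw [this]
    simp
  -- continuity of the θ-integrand
  have hθcont : ContinuousOn (fun θ => g (z + ↑t * eC θ)) (uIcc (-π) π) := by
    apply hgc.comp ((continuous_const.add (continuous_const.mul continuous_eC)).continuousOn)
    intro θ _
    exact hmem t ⟨ht0, le_refl t⟩ θ
  have hθint : IntervalIntegrable (fun θ => g (z + ↑t * eC θ)) volume (-π) π :=
    hθcont.intervalIntegrable
  -- main computation
  have hswap : ∫ θ in (-π)..π, (∫ u in (0:ℝ)..t, F u θ) = ∫ u in (0:ℝ)..t, (∫ θ in (-π)..π, F u θ) := by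
    have hπ : -π ≤ π := by linarith [Real.pi_pos]
    rw [intervalIntegral.integral_of_le hπ, intervalIntegral.integral_of_le ht0]
    simp_rw [intervalIntegral.integral_of_le ht0, intervalIntegral.integral_of_le hπ]
    apply MeasureTheory.integral_integral_swap
    rw [Measure.prod_restrict, ← Measure.volume_eq_prod]
    have hcont2 : ContinuousOn (Function.uncurry fun θ u => F u θ) (Icc (-π) π ×ˢ Icc 0 t) := by
      apply Complex.continuous_re.comp_continuousOn
      apply ContinuousOn.mul (continuous_eC.comp continuous_fst).continuousOn
      apply hfCc.comp
      · apply Continuous.continuousOn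
        exact continuous_const.add ((Complex.continuous_ofReal.comp continuous_snd).mul
          (continuous_eC.comp continuous_fst))
      · rintro ⟨θ, u⟩ ⟨_, hu⟩
        exact hmem u hu θ
    have hIOC : IntegrableOn (Function.uncurry fun θ u => F u θ)
        (Icc (-π) π ×ˢ Icc 0 t) volume :=
      hcont2.integrableOn_compact (isCompact_Icc.prod isCompact_Icc)
    exact hIOC.mono_set (Set.prod_mono Ioc_subset_Icc_self Ioc_subset_Icc_self)
  have hinner : ∀ u ∈ uIcc (0:ℝ) t, (∫ θ in (-π)..π, F u θ) = 0 := by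
    intro u hu
    rw [uIcc_of_le ht0] at hu
    have hintC : IntervalIntegrable (fun θ => eC θ * fC g (z + ↑u * eC θ)) volume (-π) π := by
      apply ContinuousOn.intervalIntegrable
      apply ContinuousOn.mul continuous_eC.continuousOn
      apply hfCc.comp ((continuous_const.add
        (continuous_const.mul continuous_eC)).continuousOn)
      intro θ _
      exact hmem u hu θ
    have hre := Complex.reCLM.intervalIntegral_comp_comm hintC
    have hkey := key_integral hg hlap (z := z) hu.1 (by linarith [hu.2] : dist z c + u < r)
    have : (∫ θ in (-π)..π, F u θ) = Complex.reCLM (∫ θ in (-π)..π, eC θ * fC g (z + ↑u * eC θ)) := by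
      rw [← hre]
      rfl
    rw [this, hkey]
    simp
  have hzero : ∫ θ in (-π)..π, (g (z + ↑t * eC θ) - g z) = 0 := by
    rw [intervalIntegral.integral_congr (g := fun θ => ∫ u in (0:ℝ)..t, F u θ)
      (fun θ _ => hrad θ)]
    rw [hswap]
    rw [intervalIntegral.integral_congr (g := fun _ => (0:ℝ)) hinner]
    simp
  have hsub' : ∫ θ in (-π)..π, (g (z + ↑t * eC θ) - g z)
      = (∫ θ in (-π)..π, g (z + ↑t * eC θ)) - 2 * π * g z := by
    rw [intervalIntegral.integral_sub hθint intervalIntegrable_const,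
      intervalIntegral.integral_const]
    have : (π - -π) = 2 * π := by ring
    rw [this]
    simp [smul_eq_mul]
  rw [hsub'] at hzero
  linarith

theorem integrableOn_of_bdd {A : Set ℂ} (hmeas : MeasurableSet A) (hfin : volume A < ⊤)
    {G : ℂ → ℝ} (hc : ContinuousOn G A) {C : ℝ} (hb : ∀ x ∈ A, |G x| ≤ C) :
    IntegrableOn G A volume := by
  apply Integrable.mono' (integrableOn_const hfin.ne) (hc.aestronglyMeasurable hmeas)
  exact (ae_restrict_iff' hmeas).2 (ae_of_all _ fun x hx => by simpa using hb x hx)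

theorem ball_polar (z : ℂ) {s : ℝ} (hs : 0 < s) {G : ℂ → ℝ} (hc : ContinuousOn G (ball z s))
    {C : ℝ} (hb : ∀ x ∈ ball z s, |G x| ≤ C) :
    ∫ x in ball z s, G x = ∫ u in (0:ℝ)..s, ∫ θ in (-π)..π, u * G (z + ↑u * eC θ) := by
  classical
  set f : ℂ → ℝ := (ball (0:ℂ) s).indicator (fun w => G (z + w)) with hf
  have h1 : ∫ x in ball z s, G x = ∫ w in ball (0:ℂ) s, G (z + w) := by
    have hmp := measurePreserving_add_left (volume : Measure ℂ) z
    have hemb : MeasurableEmbedding (fun w : ℂ => z + w) :=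
      (Homeomorph.addLeft z).measurableEmbedding
    have hpre : (fun w : ℂ => z + w) ⁻¹' (ball z s) = ball 0 s := by
      ext w
      simp [mem_ball, Complex.dist_eq, add_sub_cancel_left]
    rw [← hpre, hmp.setIntegral_preimage_emb hemb]
  have h2 : ∫ w in ball (0:ℂ) s, G (z + w) = ∫ w, f w :=
    (integral_indicator measurableSet_ball).symm
  have h3 := Complex.integral_comp_polarCoord_symm f
  have hsymm : ∀ p : ℝ × ℝ, Complex.polarCoord.symm p = ↑p.1 * eC p.2 := by
    intro p
    rw [Complex.polarCoord_symm_apply, eC]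
  have habs : ∀ p : ℝ × ℝ, ‖Complex.polarCoord.symm p‖ = |p.1| :=
    Complex.norm_polarCoord_symm
  have h4 : ∫ p in polarCoord.target, p.1 • f (Complex.polarCoord.symm p)
      = ∫ p in Ioo (0:ℝ) s ×ˢ Ioo (-π) π, p.1 • G (z + ↑p.1 * eC p.2) := by
    have hmeasT : MeasurableSet (Ioi (0:ℝ) ×ˢ Ioo (-π) π) :=
      measurableSet_Ioi.prod measurableSet_Ioo
    have hmeasS : MeasurableSet (Ioo (0:ℝ) s ×ˢ Ioo (-π) π) :=
      measurableSet_Ioo.prod measurableSet_Ioo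
    have htarget : polarCoord.target = Ioi (0:ℝ) ×ˢ Ioo (-π) π := rfl
    rw [htarget]
    rw [setIntegral_congr_fun hmeasT
      (g := (Ioo (0:ℝ) s ×ˢ Ioo (-π) π).indicator (fun p => p.1 • G (z + ↑p.1 * eC p.2)))
      ?_]
    · rw [setIntegral_indicator hmeasS]
      rw [Set.inter_eq_self_of_subset_right
        (Set.prod_mono (Ioo_subset_Ioi_self : Ioo (0:ℝ) s ⊆ Ioi 0)
          (subset_rfl : Ioo (-π) π ⊆ Ioo (-π) π))]
    · intro p hp
      obtain ⟨hp1, hp2⟩ := hp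
      simp only [mem_Ioi] at hp1
      by_cases hlt : p.1 < s
      · have hm : p ∈ Ioo (0:ℝ) s ×ˢ Ioo (-π) π := ⟨⟨hp1, hlt⟩, hp2⟩
        rw [Set.indicator_of_mem hm]
        have hmem : Complex.polarCoord.symm p ∈ ball (0:ℂ) s := by
          simp only [mem_ball, Complex.dist_eq, sub_zero]
          rw [habs p, abs_of_pos hp1]
          exact hlt
        rw [hf]
        simp only [Set.indicator_of_mem hmem]
        rw [hsymm p]
      · have hm : p ∉ Ioo (0:ℝ) s ×ˢ Ioo (-π) π := by
          intro hmm
          exact hlt hmm.1.2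
        rw [Set.indicator_of_notMem hm]
        have hmem : Complex.polarCoord.symm p ∉ ball (0:ℂ) s := by
          simp only [mem_ball, Complex.dist_eq, sub_zero]
          rw [habs p, abs_of_pos hp1]
          exact fun hc => hlt hc
        rw [hf]
        simp only [Set.indicator_of_notMem hmem, smul_zero]
  have hC0 : 0 ≤ C := le_trans (abs_nonneg _) (hb z (mem_ball_self hs))
  have hint : IntegrableOn (fun p : ℝ × ℝ => p.1 • G (z + ↑p.1 * eC p.2))
      (Ioo (0:ℝ) s ×ˢ Ioo (-π) π) volume := by
    have hmeasS : MeasurableSet (Ioo (0:ℝ) s ×ˢ Ioo (-π) π) :=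
      measurableSet_Ioo.prod measurableSet_Ioo
    have hfin : volume (Ioo (0:ℝ) s ×ˢ Ioo (-π) π) < ⊤ := by
      rw [Measure.volume_eq_prod, Measure.prod_prod]
      exact ENNReal.mul_lt_top measure_Ioo_lt_top measure_Ioo_lt_top
    have hconts : ContinuousOn (fun p : ℝ × ℝ => p.1 • G (z + ↑p.1 * eC p.2))
        (Ioo (0:ℝ) s ×ˢ Ioo (-π) π) := by
      apply ContinuousOn.smul continuous_fst.continuousOn
      apply hc.comp
      · exact (continuous_const.add ((Complex.continuous_ofReal.comp continuous_fst).mul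
          (continuous_eC.comp continuous_snd))).continuousOn
      · rintro ⟨u, θ⟩ ⟨hu, _⟩
        simp only [mem_ball, Complex.dist_eq, add_sub_cancel_left]
        rw [norm_mul, Complex.norm_real, Real.norm_eq_abs, abs_eC, mul_one, abs_of_pos hu.1]
        exact hu.2
    apply Integrable.mono' (integrableOn_const (C := s * C) hfin.ne)
      (hconts.aestronglyMeasurable hmeasS)
    · exact (ae_restrict_iff' hmeasS).2 (ae_of_all _ fun p hp => by
        have hx : z + ↑p.1 * eC p.2 ∈ ball z s := by
          simp only [mem_ball, Complex.dist_eq, add_sub_cancel_left]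
          rw [norm_mul, Complex.norm_real, Real.norm_eq_abs, abs_eC, mul_one, abs_of_pos hp.1.1]
          exact hp.1.2
        have := hb _ hx
        simp only [smul_eq_mul, Real.norm_eq_abs, abs_mul]
        calc |p.1| * |G (z + ↑p.1 * eC p.2)| ≤ s * C := by
              apply mul_le_mul _ this (abs_nonneg _) hs.le
              rw [abs_of_pos hp.1.1]; exact hp.1.2.le
        _ = s * C := rfl)
  have h5 : ∫ p in Ioo (0:ℝ) s ×ˢ Ioo (-π) π, p.1 • G (z + ↑p.1 * eC p.2)
      = ∫ u in Ioo (0:ℝ) s, ∫ θ in Ioo (-π) π, u • G (z + ↑u * eC θ) := by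
    rw [Measure.volume_eq_prod]
    apply setIntegral_prod
    rw [← Measure.volume_eq_prod]
    exact hint
  have hππ : -π ≤ π := by linarith [Real.pi_pos]
  rw [h1, h2, ← h3, h4, h5]
  rw [intervalIntegral.integral_of_le hs.le, integral_Ioc_eq_integral_Ioo]
  apply setIntegral_congr_fun measurableSet_Ioo
  intro u _
  beta_reduce
  rw [intervalIntegral.integral_of_le hππ, integral_Ioc_eq_integral_Ioo]
  simp [smul_eq_mul]

theorem volume_ball_toReal (z : ℂ) {s : ℝ} (hs : 0 ≤ s) :
    (volume (ball z s)).toReal = π * s ^ 2 := by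
  rw [Complex.volume_ball]
  rw [ENNReal.toReal_mul, ENNReal.toReal_pow, ENNReal.toReal_ofReal hs, ENNReal.coe_toReal,
    NNReal.coe_real_pi]
  ring

theorem mvp_ball (hg : ContDiffOn ℝ 2 g (ball c r))
    (hlap : ∀ z ∈ ball c r,
      fderiv ℝ (fun w => fderiv ℝ g w 1) z 1
        + fderiv ℝ (fun w => fderiv ℝ g w Complex.I) z Complex.I = 0)
    {z : ℂ} {s : ℝ} (hs : 0 < s) (hsr : s ≤ r - dist z c)
    {C : ℝ} (hb : ∀ x ∈ ball c r, |g x| ≤ C) :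
    ∫ x in ball z s, g x = π * s ^ 2 * g z := by
  have hsub : ball z s ⊆ ball c r := by
    intro x hx
    simp only [mem_ball] at hx ⊢
    have := dist_triangle x z c
    linarith
  rw [ball_polar z hs (hg.continuousOn.mono hsub) (fun x hx => hb x (hsub hx))]
  have hne : ∀ᵐ u : ℝ, u ≠ s := by
    rw [ae_iff]
    have hset : {u : ℝ | ¬ u ≠ s} = {s} := by ext u; simp
    rw [hset]
    exact Real.volume_singleton
  have hae : ∀ᵐ u : ℝ, u ∈ Set.uIoc (0:ℝ) s →
      (∫ θ in (-π)..π, u * g (z + ↑u * eC θ)) = 2 * π * g z * u := by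
    filter_upwards [hne] with u hu hmem
    rw [Set.uIoc_of_le hs.le] at hmem
    have hu0 : 0 < u := hmem.1
    have hus : u < s := lt_of_le_of_ne hmem.2 hu
    rw [intervalIntegral.integral_const_mul]
    rw [circle_mvp hg hlap hu0.le (by linarith : dist z c + u < r)]
    ring
  rw [intervalIntegral.integral_congr_ae hae]
  have : ∫ u in (0:ℝ)..s, 2 * π * g z * u = 2 * π * g z * ∫ u in (0:ℝ)..s, u :=
    intervalIntegral.integral_const_mul _ _
  rw [this, integral_id]
  ring

theorem mainC (hr : 0 < r)
    (hg : ContDiffOn ℝ 2 g (ball c r))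
    (hlap : ∀ z ∈ ball c r,
      fderiv ℝ (fun w => fderiv ℝ g w 1) z 1
        + fderiv ℝ (fun w => fderiv ℝ g w Complex.I) z Complex.I = 0)
    {S : ℝ} (hS : ∀ x ∈ ball c r, ∀ y ∈ ball c r, |g x - g y| ≤ S) :
    ∀ z ∈ ball c r, |g z - g c| ≤ 2 * dist z c / (r - dist z c) * S := by
  intro z hz
  have hcball : c ∈ ball c r := mem_ball_self hr
  have hS0 : 0 ≤ S := by
    have := hS c hcball c hcball
    simpa using this
  have hd0 : 0 ≤ dist z c := dist_nonneg
  have hdr : dist z c < r := by simpa [mem_ball] using hz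
  rcases eq_or_lt_of_le hd0 with h0 | hdpos
  · have hzc : z = c := dist_eq_zero.mp h0.symm
    rw [hzc]
    simp [dist_self]
  · set d := dist z c with hddef
    set s := r - d with hsdef
    have hs : 0 < s := by rw [hsdef]; linarith
    have hb : ∀ x ∈ ball c r, |g x| ≤ |g c| + S := by
      intro x hx
      have h1 := hS x hx c hcball
      have h2 := abs_sub_abs_le_abs_sub (g x) (g c)
      linarith
    have hsubz : ball z s ⊆ ball c r := by
      intro x hx
      simp only [mem_ball] at hx ⊢
      have := dist_triangle x z c
      rw [hsdef] at hx
      linarith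
    have hsubc : ball c s ⊆ ball c r := ball_subset_ball (by rw [hsdef]; linarith)
    have hmvz : ∫ x in ball z s, g x = π * s ^ 2 * g z :=
      mvp_ball hg hlap hs (le_of_eq hsdef) hb
    have hmvc : ∫ x in ball c s, g x = π * s ^ 2 * g c :=
      mvp_ball hg hlap hs (by rw [dist_self]; rw [hsdef]; linarith) hb
    set K : Set ℂ := ball z s ∩ ball c s with hK
    set P : Set ℂ := ball z s \ ball c s with hP
    set Q : Set ℂ := ball c s \ ball z s with hQ
    have hmK : MeasurableSet K := measurableSet_ball.inter measurableSet_ball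
    have hmP : MeasurableSet P := measurableSet_ball.diff measurableSet_ball
    have hmQ : MeasurableSet Q := measurableSet_ball.diff measurableSet_ball
    have hfinz : volume (ball z s) < ⊤ := measure_ball_lt_top
    have hfinc : volume (ball c s) < ⊤ := measure_ball_lt_top
    have hfinK : volume K < ⊤ := lt_of_le_of_lt (measure_mono Set.inter_subset_left) hfinz
    have hfinP : volume P < ⊤ := lt_of_le_of_lt (measure_mono Set.diff_subset) hfinz
    have hfinQ : volume Q < ⊤ := lt_of_le_of_lt (measure_mono Set.diff_subset) hfinc
    have hintOn : ∀ A : Set ℂ, MeasurableSet A → volume A < ⊤ → A ⊆ ball c r →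
        IntegrableOn g A volume := by
      intro A hmA hfA hsubA
      exact integrableOn_of_bdd hmA hfA (hg.continuousOn.mono hsubA)
        (fun x hx => hb x (hsubA hx))
    have hintK : IntegrableOn g K volume :=
      hintOn K hmK hfinK (fun x hx => hsubz hx.1)
    have hintP : IntegrableOn g P volume :=
      hintOn P hmP hfinP (fun x hx => hsubz hx.1)
    have hintQ : IntegrableOn g Q volume :=
      hintOn Q hmQ hfinQ (fun x hx => hsubc hx.1)
    -- splittings
    have hsplitz : ∫ x in ball z s, g x = (∫ x in K, g x) + ∫ x in P, g x := by
      rw [← setIntegral_union (Set.disjoint_left.mpr fun x hxK hxP => hxP.2 hxK.2) hmP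
        hintK hintP]
      congr 1
      rw [hK, hP, Set.inter_union_diff]
    have hsplitc : ∫ x in ball c s, g x = (∫ x in K, g x) + ∫ x in Q, g x := by
      rw [← setIntegral_union (Set.disjoint_left.mpr fun x hxK hxQ => hxQ.2 hxK.1) hmQ
        hintK hintQ]
      congr 1
      rw [hK, hQ, Set.inter_comm, Set.inter_union_diff]
    have hdiffint : π * s ^ 2 * (g z - g c) = (∫ x in P, g x) - ∫ x in Q, g x := by
      have := hsplitz
      rw [hmvz] at this
      have h2 := hsplitc
      rw [hmvc] at h2
      have : π * s ^ 2 * (g z - g c)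
          = ((∫ x in K, g x) + ∫ x in P, g x) - ((∫ x in K, g x) + ∫ x in Q, g x) := by
        rw [← this, ← h2]; ring
      rw [this]; ring
    -- volumes
    have hvz : (volume (ball z s)).toReal = π * s ^ 2 := volume_ball_toReal z hs.le
    have hvc : (volume (ball c s)).toReal = π * s ^ 2 := volume_ball_toReal c hs.le
    have hvolP : (volume P).toReal = π * s ^ 2 - (volume K).toReal := by
      have hsub : K ⊆ ball z s := Set.inter_subset_left
      have : volume P = volume (ball z s) - volume K := by
        rw [hP, show ball z s \ ball c s = ball z s \ K by rw [hK, Set.diff_self_inter]]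
        exact measure_diff hsub hmK.nullMeasurableSet hfinK.ne
      rw [this, ENNReal.toReal_sub_of_le (measure_mono hsub) hfinz.ne, hvz]
    have hvolQ : (volume Q).toReal = π * s ^ 2 - (volume K).toReal := by
      have hsub : K ⊆ ball c s := Set.inter_subset_right
      have : volume Q = volume (ball c s) - volume K := by
        rw [hQ, show ball c s \ ball z s = ball c s \ K by
          rw [hK, Set.inter_comm, Set.diff_self_inter]]
        exact measure_diff hsub hmK.nullMeasurableSet hfinK.ne
      rw [this, ENNReal.toReal_sub_of_le (measure_mono hsub) hfinc.ne, hvc]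
    set m : ℝ := (volume P).toReal with hmdef
    have hmQtoReal : (volume Q).toReal = m := by rw [hvolQ, ← hvolP]
    have hm0 : 0 ≤ m := ENNReal.toReal_nonneg
    -- the lune bound
    have hmle : m ≤ 2 * π * d * s := by
      by_cases hds : d < s
      · have hsubP : P ⊆ ball z s \ ball z (s - d) := by
          intro x hx
          refine ⟨hx.1, fun hmem => hx.2 ?_⟩
          simp only [mem_ball] at hmem ⊢
          have := dist_triangle x z c
          linarith
        have h1 : m ≤ (volume (ball z s \ ball z (s - d))).toReal := by
          apply ENNReal.toReal_mono
          · exact ((lt_of_le_of_lt (measure_mono Set.diff_subset) hfinz)).ne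
          · exact measure_mono hsubP
        have h2 : (volume (ball z s \ ball z (s - d))).toReal
            = π * s ^ 2 - π * (s - d) ^ 2 := by
          have hsub2 : ball z (s - d) ⊆ ball z s := ball_subset_ball (by linarith)
          have hfin2 : volume (ball z (s - d)) < ⊤ := measure_ball_lt_top
          rw [measure_diff hsub2 measurableSet_ball.nullMeasurableSet hfin2.ne,
            ENNReal.toReal_sub_of_le (measure_mono hsub2) hfinz.ne,
            volume_ball_toReal z hs.le, volume_ball_toReal z (by linarith : (0:ℝ) ≤ s - d)]
        rw [h2] at h1
        nlinarith [Real.pi_pos]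
      · push_neg at hds
        have h1 : m ≤ (volume (ball z s)).toReal := by
          apply ENNReal.toReal_mono hfinz.ne
          exact measure_mono Set.diff_subset
        rw [hvz] at h1
        nlinarith [Real.pi_pos]
    -- estimate |∫_P g - ∫_Q g| ≤ m S
    have hest : |(∫ x in P, g x) - ∫ x in Q, g x| ≤ m * S := by
      rcases eq_or_lt_of_le hm0 with hm00 | hmpos
      · have hP0 : volume P = 0 := by
          have h : (volume P).toReal = 0 := by rw [← hmdef, ← hm00]
          rcases (ENNReal.toReal_eq_zero_iff _).mp h with h' | h'
          · exact h'
          · exact absurd h' hfinP.ne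
        have hQ0 : volume Q = 0 := by
          have h : (volume Q).toReal = 0 := by rw [hmQtoReal, ← hm00]
          rcases (ENNReal.toReal_eq_zero_iff _).mp h with h' | h'
          · exact h'
          · exact absurd h' hfinQ.ne
        rw [show volume.restrict P = 0 from Measure.restrict_eq_zero.mpr hP0,
          show volume.restrict Q = 0 from Measure.restrict_eq_zero.mpr hQ0,
          integral_zero_measure]
        simp [← hm00]
      · set a : ℝ := (∫ x in Q, g x) / m with hadef
        have hma : m * a = ∫ x in Q, g x := by
          rw [hadef, mul_div_cancel₀ _ (ne_of_gt hmpos)]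
        have hclaim : ∀ x ∈ P, |g x - a| ≤ S := by
          intro x hx
          have hx' : x ∈ ball c r := hsubz hx.1
          have hub : (∫ y in Q, (g x - S)) ≤ ∫ y in Q, g y := by
            apply setIntegral_mono_on (integrableOn_const hfinQ.ne) hintQ hmQ
            intro y hy
            have := hS x hx' y (hsubc hy.1)
            have := abs_le.mp this
            linarith [this.1]
          have hlb : (∫ y in Q, g y) ≤ ∫ y in Q, (g x + S) := by
            apply setIntegral_mono_on hintQ (integrableOn_const hfinQ.ne) hmQ
            intro y hy
            have := abs_le.mp (hS x hx' y (hsubc hy.1))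
            linarith [this.2]
          rw [setIntegral_const, measureReal_def, hmQtoReal, smul_eq_mul] at hub hlb
          have hA1 : g x - S ≤ a := by
            rw [hadef]
            exact (le_div_iff₀ hmpos).mpr (by nlinarith)
          have hA2 : a ≤ g x + S := by
            rw [hadef]
            exact (div_le_iff₀ hmpos).mpr (by nlinarith)
          rw [abs_le]
          constructor <;> linarith
        have hrw : (∫ x in P, g x) - ∫ x in Q, g x = ∫ x in P, (g x - a) := by
          rw [integral_sub hintP (integrableOn_const hfinP.ne)]
          rw [setIntegral_const, measureReal_def, smul_eq_mul, ← hmdef, hma]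
        rw [hrw]
        calc |∫ x in P, (g x - a)| ≤ ∫ x in P, |g x - a| := by
              simpa [Real.norm_eq_abs] using
                norm_integral_le_integral_norm (μ := volume.restrict P) (fun x => g x - a)
        _ ≤ ∫ x in P, S := by
              apply setIntegral_mono_on _ (integrableOn_const hfinP.ne) hmP
                (fun x hx => hclaim x hx)
              exact (hintP.sub (integrableOn_const hfinP.ne)).abs
        _ = m * S := by rw [setIntegral_const, measureReal_def, smul_eq_mul, ← hmdef]
    -- conclude
    have hkey : π * s ^ 2 * |g z - g c| ≤ 2 * π * d * s * S := by
      have h1 : |π * s ^ 2 * (g z - g c)| ≤ m * S := by rw [hdiffint]; exact hest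
      have h2 : |π * s ^ 2 * (g z - g c)| = π * s ^ 2 * |g z - g c| := by
        rw [abs_mul, abs_of_pos (by positivity : (0:ℝ) < π * s ^ 2)]
      rw [h2] at h1
      have h3 : m * S ≤ 2 * π * d * s * S := mul_le_mul_of_nonneg_right hmle hS0
      linarith
    rw [div_mul_eq_mul_div, le_div_iff₀ hs]
    have hps : 0 < π * s := mul_pos Real.pi_pos hs
    have h2 : (π * s) * (|g z - g c| * s) ≤ (π * s) * (2 * d * S) := by
      calc (π * s) * (|g z - g c| * s) = π * s ^ 2 * |g z - g c| := by ring
      _ ≤ 2 * π * d * s * S := hkey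
      _ = (π * s) * (2 * d * S) := by ring
    exact le_of_mul_le_mul_left h2 hps

end HarnackAux

section Transfer

open HarnackAux

local notation "E2" => EuclideanSpace ℝ (Fin 2)

def eqv : ℂ ≃ₗᵢ[ℝ] E2 := Complex.orthonormalBasisOneI.repr

theorem eqv_one : eqv 1 = EuclideanSpace.single 0 1 := by
  apply PiLp.ext
  intro i
  fin_cases i <;>
    simp [eqv, Complex.orthonormalBasisOneI_repr_apply, EuclideanSpace.single_apply]

theorem eqv_I : eqv Complex.I = EuclideanSpace.single 1 1 := by
  apply PiLp.ext
  intro i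
  fin_cases i <;>
    simp [eqv, Complex.orthonormalBasisOneI_repr_apply, EuclideanSpace.single_apply]

def eqvL : ℂ →L[ℝ] E2 := eqv.toLinearIsometry.toContinuousLinearMap

theorem eqvL_apply (w : ℂ) : eqvL w = eqv w := rfl

theorem hasFDerivAt_eqv (w : ℂ) : HasFDerivAt (fun w : ℂ => eqv w) eqvL w := by
  have := eqvL.hasFDerivAt (x := w)
  convert this using 1
  exact funext fun _ => rfl

end Transfer

/-- Oscillation bound for a bounded (not necessarily non-negative) harmonic function on a
planar ball, in terms of the supremum of pairwise oscillations over the ball. -/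
theorem harnack_oscillation_general (z₀ : EuclideanSpace ℝ (Fin 2)) (r : ℝ) (hr : 0 < r)
    (h : EuclideanSpace ℝ (Fin 2) → ℝ)
    (hh : HarmonicOnPlane h (ball z₀ r))
    (hbdd : BddAbove ((fun p : EuclideanSpace ℝ (Fin 2) × EuclideanSpace ℝ (Fin 2) =>
      |h p.1 - h p.2|) '' (ball z₀ r ×ˢ ball z₀ r))) :
    ∀ z ∈ ball z₀ r,
      |h z - h z₀| ≤ 2 * dist z z₀ / (r - dist z z₀) *
        sSup ((fun p : EuclideanSpace ℝ (Fin 2) × EuclideanSpace ℝ (Fin 2) =>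
          |h p.1 - h p.2|) '' (ball z₀ r ×ˢ ball z₀ r)) := by
  intro z hz
  classical
  obtain ⟨hC2, hL⟩ := hh
  set S : ℝ := sSup ((fun p : EuclideanSpace ℝ (Fin 2) × EuclideanSpace ℝ (Fin 2) =>
    |h p.1 - h p.2|) '' (ball z₀ r ×ˢ ball z₀ r)) with hSdef
  set c : ℂ := eqv.symm z₀ with hc
  have hec : eqv c = z₀ := eqv.apply_symm_apply z₀
  set g : ℂ → ℝ := fun w => h (eqv w) with hgdef
  have hmem : ∀ w : ℂ, eqv w ∈ ball z₀ r ↔ w ∈ ball c r := by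
    intro w
    rw [mem_ball, mem_ball, ← hec, eqv.dist_map]
  have hmapsTo : Set.MapsTo (fun w : ℂ => eqv w) (ball c r) (ball z₀ r) :=
    fun w hw => (hmem w).mpr hw
  have hgC : ContDiffOn ℝ 2 g (ball c r) := hC2.comp eqv.contDiff.contDiffOn hmapsTo
  have hder1 : ∀ w ∈ ball c r, ∀ v : ℂ, fderiv ℝ g w v = fderiv ℝ h (eqv w) (eqv v) := by
    intro w hw v
    have hhFD : HasFDerivAt h (fderiv ℝ h (eqv w)) (eqv w) :=
      ((hC2.differentiableOn (by norm_num)).differentiableAt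
        (isOpen_ball.mem_nhds ((hmem w).mpr hw))).hasFDerivAt
    have hgFD : HasFDerivAt g ((fderiv ℝ h (eqv w)).comp eqvL) w :=
      hhFD.comp w (hasFDerivAt_eqv w)
    rw [hgFD.fderiv]
    rfl
  have hD1 : ContDiffOn ℝ 1 (fderiv ℝ h) (ball z₀ r) :=
    hC2.fderiv_of_isOpen isOpen_ball (by norm_num)
  have hder2 : ∀ w ∈ ball c r, ∀ v : ℂ,
      fderiv ℝ (fun w' => fderiv ℝ g w' v) w v
        = fderiv ℝ (fun x => fderiv ℝ h x (eqv v)) (eqv w) (eqv v) := by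
    intro w hw v
    set Hv : EuclideanSpace ℝ (Fin 2) → ℝ := fun x => fderiv ℝ h x (eqv v) with hHv
    have hEq : Set.EqOn (fun w' => fderiv ℝ g w' v) (fun w' => Hv (eqv w')) (ball c r) :=
      fun w' hw' => hder1 w' hw' v
    have hfeq : fderiv ℝ (fun w' => fderiv ℝ g w' v) w = fderiv ℝ (fun w' => Hv (eqv w')) w := by
      apply Filter.EventuallyEq.fderiv_eq
      exact (isOpen_ball.eventually_mem hw).mono fun y hy => hEq hy
    rw [hfeq]
    have hHvFD : HasFDerivAt Hv
        ((ContinuousLinearMap.apply ℝ ℝ (eqv v)).comp (fderiv ℝ (fderiv ℝ h) (eqv w)))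
        (eqv w) := by
      apply (ContinuousLinearMap.apply ℝ ℝ (eqv v)).hasFDerivAt.comp
      exact ((hD1.differentiableOn (by norm_num)).differentiableAt
        (isOpen_ball.mem_nhds ((hmem w).mpr hw))).hasFDerivAt
    have hcompFD : HasFDerivAt (fun w' => Hv (eqv w'))
        (((ContinuousLinearMap.apply ℝ ℝ (eqv v)).comp
          (fderiv ℝ (fderiv ℝ h) (eqv w))).comp eqvL) w :=
      hHvFD.comp w (hasFDerivAt_eqv w)
    rw [hcompFD.fderiv, hHvFD.fderiv]
    rfl
  have hlapg : ∀ w ∈ ball c r,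
      fderiv ℝ (fun w' => fderiv ℝ g w' 1) w 1
        + fderiv ℝ (fun w' => fderiv ℝ g w' Complex.I) w Complex.I = 0 := by
    intro w hw
    rw [hder2 w hw 1, hder2 w hw Complex.I, eqv_one, eqv_I]
    have := hL (eqv w) ((hmem w).mpr hw)
    rw [Fin.sum_univ_two] at this
    exact this
  have hSb : ∀ x ∈ ball c r, ∀ y ∈ ball c r, |g x - g y| ≤ S := by
    intro x hx y hy
    apply le_csSup hbdd
    exact ⟨(eqv x, eqv y), ⟨(hmem x).mpr hx, (hmem y).mpr hy⟩, rfl⟩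
  have hmemz : eqv.symm z ∈ ball c r := by
    have := (hmem (eqv.symm z))
    rw [eqv.apply_symm_apply] at this
    exact this.mp hz
  have hmain := HarnackAux.mainC hr hgC hlapg hSb (eqv.symm z) hmemz
  have h1 : g (eqv.symm z) = h z := by rw [hgdef]; simp only [eqv.apply_symm_apply]
  have h2 : g c = h z₀ := by rw [hgdef]; simp only [hec]
  have h3 : dist (eqv.symm z) c = dist z z₀ := by
    rw [hc]
    exact eqv.symm.dist_map z z₀
  rw [h1, h2, h3] at hmain
  exact hmain
end
end
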